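/- arXiv:2206.07441 — 2 statements merged into one kernel-verified Lean document; each statement's English description precedes it below -/
import Mathlib

section
/- If two tests α, β ∈ E are E-separable (α #_E β), then for every Mealy machine N with the same input/output alphabets as M satisfying λ_M(γ) = λ_N(γ) for all γ ∈ E, the states δ_N(α) and δ_N(β) of N are distinct. -/
structure NFA' (X : Type) where
  S : Type
  step : S → X → Set S
  start : S

def NFA'.steps {X : Type} (A : NFA' X) : A.S → List X → Set A.S
  | s, [] => {s}
  | s, x :: w => ⋃ t ∈ A.step s x, A.steps t w

/-- The language of a state: words on which `A` has a run starting from `s`. -/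
def NFA'.lang {X : Type} (A : NFA' X) (s : A.S) : Set (List X) :=
  {w | (A.steps s w).Nonempty}

structure Mealy (I O : Type) where
  S : Type
  next : S → I → S
  out : S → I → O
  start : S

def Mealy.nexts {I O : Type} (M : Mealy I O) : M.S → List I → M.S
  | s, [] => s
  | s, x :: w => M.nexts (M.next s x) w

def Mealy.outs {I O : Type} (M : Mealy I O) : M.S → List I → List O
  | _, [] => []
  | s, x :: w => M.out s x :: M.outs (M.next s x) w

theorem Mealy.outs_append {I O : Type} (M : Mealy I O) (s : M.S) (u v : List I) :
    M.outs s (u ++ v) = M.outs s u ++ M.outs (M.nexts s u) v := by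
  induction u generalizing s with
  | nil => rfl
  | cons x w ih => simp [Mealy.outs, Mealy.nexts, ih]

theorem Mealy.outs_nexts_eq_of_outs_append_eq {I O : Type} (M N : Mealy I O) (s : M.S) (t : N.S)
    (u v : List I) (hu : M.outs s u = N.outs t u)
    (huv : M.outs s (u ++ v) = N.outs t (u ++ v)) :
    M.outs (M.nexts s u) v = N.outs (N.nexts t u) v := by
  rw [M.outs_append, N.outs_append, hu] at huv
  exact List.append_cancel_left huv

theorem separable_distinct_states_general {I O : Type} (M N : Mealy I O)
    (E : Set (List I))
    (α β : List I) (hα : α ∈ E) (hβ : β ∈ E)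
    (hsep : ∃ γ : List I, α ++ γ ∈ E ∧ β ++ γ ∈ E ∧
      M.outs (M.nexts M.start α) γ ≠ M.outs (M.nexts M.start β) γ)
    (hagree : ∀ γ ∈ E, M.outs M.start γ = N.outs N.start γ) :
    N.nexts N.start α ≠ N.nexts N.start β := by
  obtain ⟨γ, hαγ, hβγ, hne⟩ := hsep
  intro hαβ
  apply hne
  calc M.outs (M.nexts M.start α) γ
      = N.outs (N.nexts N.start α) γ :=
        M.outs_nexts_eq_of_outs_append_eq N _ _ α γ (hagree α hα) (hagree _ hαγ)
    _ = N.outs (N.nexts N.start β) γ := by rw [hαβ]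
    _ = M.outs (M.nexts M.start β) γ :=
        (M.outs_nexts_eq_of_outs_append_eq N _ _ β γ (hagree β hβ) (hagree _ hβγ)).symm

/-- If tests α, β ∈ E are E-separable, then any machine N agreeing with M on E
reaches distinct states on α and β. -/
theorem separable_distinct_states {I O : Type} (M N : Mealy I O)
    (E : Set (List I)) (hfin : E.Finite)
    (hpc : ∀ u v : List I, u <+: v → v ∈ E → u ∈ E)
    (α β : List I) (hα : α ∈ E) (hβ : β ∈ E)
    (hsep : ∃ γ : List I, α ++ γ ∈ E ∧ β ++ γ ∈ E ∧
      M.outs (M.nexts M.start α) γ ≠ M.outs (M.nexts M.start β) γ)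
    (hagree : ∀ γ ∈ E, M.outs M.start γ = N.outs N.start γ) :
    N.nexts N.start α ≠ N.nexts N.start β :=
  separable_distinct_states_general M N E α β hα hβ hsep hagree
end

section
/- Let M be a Mealy machine with state set S_M and A an NFA over I_M with state set S_A. For all s, t ∈ S_M and a ∈ S_A: if s and t are distinguishable in context a (i.e., some α ∈ L_A(a) satisfies λ_M(s,α) ≠ λ_M(t,α)), then there exists such a distinguishing word α ∈ L_A(a) with |α| ≤ |S_M|·|S_A|. -/
namespace Setoid

variable {α : Type*} [Finite α]

theorem card_quotient_le_of_le {r s : Setoid α} (h : r ≤ s) :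
    Nat.card (Quotient s) ≤ Nat.card (Quotient r) :=
  Nat.card_le_card_of_surjective (map_of_le h) (Quotient.ind fun x => ⟨⟦x⟧, rfl⟩)

theorem eq_of_le_of_card_quotient_eq {r s : Setoid α} (h : r ≤ s)
    (hc : Nat.card (Quotient r) = Nat.card (Quotient s)) : r = s := by
  have hinj : Function.Injective (map_of_le h) :=
    ((Nat.bijective_iff_surjective_and_card _).2
      ⟨Quotient.ind fun x => ⟨⟦x⟧, rfl⟩, hc⟩).injective
  refine le_antisymm h fun x y hxy => Quotient.exact (hinj ?_)
  exact Quotient.sound hxy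

theorem exists_lt_card_succ_eq_of_antitone [Nonempty α] {r : ℕ → Setoid α} (hr : Antitone r) :
    ∃ k < Nat.card α, r (k + 1) = r k := by
  by_contra! hne
  set c := fun k => Nat.card (Quotient (r k))
  have hstep : ∀ k < Nat.card α, c k < c (k + 1) := fun k hk =>
    (card_quotient_le_of_le (hr k.le_succ)).lt_of_ne
      fun h => hne k hk (eq_of_le_of_card_quotient_eq (hr k.le_succ) h.symm)
  have hgrow : ∀ n ≤ Nat.card α, n + 1 ≤ c n := by
    intro n hn
    induction n with
    | zero =>
      have : Nonempty (Quotient (r 0)) := .map (Quotient.mk _) ‹_›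
      exact Nat.card_pos
    | succ n ih => exact (ih (by omega)).trans_lt (hstep n (by omega))
  have hbound : c (Nat.card α) ≤ Nat.card α :=
    Nat.card_le_card_of_surjective _ Quotient.mk_surjective
  have := hgrow _ le_rfl
  omega

end Setoid

theorem NFA'.nil_mem_lang {X : Type} (A : NFA' X) (a : A.S) : [] ∈ A.lang a :=
  ⟨a, rfl⟩

theorem NFA'.cons_mem_lang {X : Type} (A : NFA' X) (a : A.S) (x : X) (β : List X) :
    x :: β ∈ A.lang a ↔ ∃ b ∈ A.step a x, β ∈ A.lang b := by
  change (A.steps a (x :: β)).Nonempty ↔ ∃ b ∈ A.step a x, (A.steps b β).Nonempty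
  simp only [NFA'.steps, Set.nonempty_iUnion, exists_prop]

namespace Mealy

variable {I O : Type} (M : Mealy I O) (A : NFA' I)

def EquivUpTo (k : ℕ) (a : A.S) (s t : M.S) : Prop :=
  ∀ α ∈ A.lang a, α.length ≤ k → M.outs s α = M.outs t α

variable {M A}

theorem EquivUpTo.mono {j k : ℕ} {a : A.S} {s t : M.S} (hjk : j ≤ k)
    (h : M.EquivUpTo A k a s t) : M.EquivUpTo A j a s t :=
  fun α hα hl => h α hα (hl.trans hjk)

theorem equivUpTo_succ {k : ℕ} {a : A.S} {s t : M.S} :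
    M.EquivUpTo A (k + 1) a s t ↔ ∀ x, ∀ b ∈ A.step a x,
      M.out s x = M.out t x ∧ M.EquivUpTo A k b (M.next s x) (M.next t x) := by
  constructor
  · intro h x b hb
    have hx : ∀ β ∈ A.lang b, β.length ≤ k →
        M.out s x = M.out t x ∧ M.outs (M.next s x) β = M.outs (M.next t x) β :=
      fun β hβ hl => List.cons_eq_cons.1 <|
        h (x :: β) ((A.cons_mem_lang a x β).2 ⟨b, hb, hβ⟩) (Nat.succ_le_succ hl)
    exact ⟨(hx [] (A.nil_mem_lang b) (Nat.zero_le k)).1, fun β hβ hl => (hx β hβ hl).2⟩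
  · rintro h (_ | ⟨x, β⟩) hα hl
    · rfl
    · obtain ⟨b, hb, hβ⟩ := (A.cons_mem_lang a x β).1 hα
      obtain ⟨hout, hnext⟩ := h x b hb
      exact congrArg₂ List.cons hout (hnext β hβ (Nat.le_of_succ_le_succ hl))

variable (M A)

def equivUpToSetoid (k : ℕ) : Setoid (A.S × M.S) where
  r p q := p.1 = q.1 ∧ M.EquivUpTo A k p.1 p.2 q.2
  iseqv :=
    { refl := fun _ => ⟨rfl, fun _ _ _ => rfl⟩
      symm := by
        rintro ⟨a, s⟩ ⟨_, t⟩ ⟨rfl, h⟩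
        exact ⟨rfl, fun α hα hl => (h α hα hl).symm⟩
      trans := by
        rintro ⟨a, s⟩ ⟨_, t⟩ ⟨_, u⟩ ⟨rfl, h₁⟩ ⟨rfl, h₂⟩
        exact ⟨rfl, fun α hα hl => (h₁ α hα hl).trans (h₂ α hα hl)⟩ }

variable {M A}

theorem equivUpToSetoid_apply {k : ℕ} {a : A.S} {s t : M.S} :
    M.equivUpToSetoid A k (a, s) (a, t) ↔ M.EquivUpTo A k a s t :=
  and_iff_right rfl

theorem antitone_equivUpToSetoid : Antitone (M.equivUpToSetoid A) :=
  fun _ _ hjk _ _ h => ⟨h.1, h.2.mono hjk⟩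

theorem equivUpToSetoid_succ_succ_eq {k : ℕ}
    (h : M.equivUpToSetoid A (k + 1) = M.equivUpToSetoid A k) :
    M.equivUpToSetoid A (k + 2) = M.equivUpToSetoid A (k + 1) := by
  have hk : ∀ a s t, M.EquivUpTo A (k + 1) a s t ↔ M.EquivUpTo A k a s t := fun a s t => by
    rw [← equivUpToSetoid_apply, ← equivUpToSetoid_apply, h]
  ext ⟨a, s⟩ ⟨b, t⟩
  refine and_congr_right fun (hab : a = b) => ?_
  subst hab
  change M.EquivUpTo A (k + 1 + 1) a s t ↔ M.EquivUpTo A (k + 1) a s t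
  rw [equivUpTo_succ, equivUpTo_succ]
  simp only [hk]

theorem equivUpToSetoid_succ_eq_of_le {k n : ℕ}
    (h : M.equivUpToSetoid A (k + 1) = M.equivUpToSetoid A k) (hkn : k ≤ n) :
    M.equivUpToSetoid A (n + 1) = M.equivUpToSetoid A n := by
  induction n, hkn using Nat.le_induction with
  | base => exact h
  | succ n _ ih => exact equivUpToSetoid_succ_succ_eq ih

theorem equivUpToSetoid_eq_of_le {k n : ℕ}
    (h : M.equivUpToSetoid A (k + 1) = M.equivUpToSetoid A k) (hkn : k ≤ n) :
    M.equivUpToSetoid A n = M.equivUpToSetoid A k := by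
  induction n, hkn using Nat.le_induction with
  | base => rfl
  | succ n hkn ih => rw [equivUpToSetoid_succ_eq_of_le h hkn, ih]

end Mealy

/-- If some word of `L_A(a)` distinguishes s and t, then some word of
`L_A(a)` of length at most `|S_M|·|S_A|` does so. -/
theorem short_distinguishing_word {I O : Type} (M : Mealy I O) (A : NFA' I)
    [Fintype M.S] [Fintype A.S] (s t : M.S) (a : A.S)
    (h : ∃ α ∈ A.lang a, M.outs s α ≠ M.outs t α) :
    ∃ α ∈ A.lang a, α.length ≤ Fintype.card M.S * Fintype.card A.S ∧
      M.outs s α ≠ M.outs t α := by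
  obtain ⟨α, hα, hne⟩ := h
  by_contra! hshort
  have : Nonempty (A.S × M.S) := ⟨(a, s)⟩
  obtain ⟨k, hk, hstab⟩ := Setoid.exists_lt_card_succ_eq_of_antitone
    (Mealy.antitone_equivUpToSetoid (M := M) (A := A))
  have hcard : Nat.card (A.S × M.S) = Fintype.card M.S * Fintype.card A.S := by
    rw [Nat.card_prod, Nat.card_eq_fintype_card, Nat.card_eq_fintype_card, mul_comm]
  have hequiv_card : M.EquivUpTo A (Fintype.card M.S * Fintype.card A.S) a s t := hshort
  have hequiv_k : M.equivUpToSetoid A k (a, s) (a, t) :=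
    Mealy.equivUpToSetoid_apply.2 (hequiv_card.mono (by omega))
  rw [← Mealy.equivUpToSetoid_eq_of_le hstab (k.le_add_right α.length),
    Mealy.equivUpToSetoid_apply] at hequiv_k
  exact hne (hequiv_k α hα (Nat.le_add_left _ _))
end
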